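/- Let γ > 0, γ ≠ 1, and set z₁ = (1, 1, 0, 1/2, 0, 3/2, 5/2, 0) and z₂ = (γ, 1, 0, 1/(2γ), 0, 3/(2γ), 5/(2γ²), 0) in ℝ⁸. Then the determinant of the 3×3 submatrix formed by the first three rows of Z_𝒜(z₁ − z₂) equals 2(1−γ)(1−1/γ)², which is nonzero; hence Z_𝒜(z₁ − z₂) has rank 3 and z₁ − z₂ does not belong to the wave cone Λ. -/

import Mathlib

/-!
Both states have vanishing `m₂`, `U₁₂` and `r₂`, and the same `m₁`, so the top 3×3 block of
`Z_𝒜(z₁ − z₂)` is diagonal with entries `1 − γ`, `2(1 − 1/γ)`, `1 − 1/γ`, all nonzero for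
`γ ≠ 1`. A nonzero maximal minor gives rank 3, i.e. `Z_𝒜(z₁ − z₂) ξ = 0` only for `ξ = 0`;
since `(Σᵢ ξᵢ A⁽ⁱ⁾) z = Z_𝒜(z) ξ`, this is exactly `z₁ − z₂ ∉ Λ`.
-/

open scoped Matrix

noncomputable section

/-- The coefficient matrix `A⁽¹⁾` (time direction) of the linearized full Euler system
`𝒜z = Σᵢ A⁽ⁱ⁾ ∂ᵢ z = 0` for `z = (ρ, m₁, m₂, U₁₁, U₁₂, E, r₁, r₂)`. -/
def eulerA1 : Matrix (Fin 4) (Fin 8) ℝ :=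
  !![1, 0, 0, 0, 0, 0, 0, 0;
     0, 1, 0, 0, 0, 0, 0, 0;
     0, 0, 1, 0, 0, 0, 0, 0;
     0, 0, 0, 0, 0, 1, 0, 0]

/-- The coefficient matrix `A⁽²⁾` (first spatial direction). -/
def eulerA2 : Matrix (Fin 4) (Fin 8) ℝ :=
  !![0, 1, 0, 0, 0, 0, 0, 0;
     0, 0, 0, 1, 0, 1, 0, 0;
     0, 0, 0, 0, 1, 0, 0, 0;
     0, 0, 0, 0, 0, 0, 1, 0]

/-- The coefficient matrix `A⁽³⁾` (second spatial direction). -/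
def eulerA3 : Matrix (Fin 4) (Fin 8) ℝ :=
  !![0, 0, 1, 0, 0, 0, 0, 0;
     0, 0, 0, 0, 1, 0, 0, 0;
     0, 0, 0, -1, 0, 1, 0, 0;
     0, 0, 0, 0, 0, 0, 0, 1]

/-- The three coefficient matrices of the linearized full Euler system. -/
def eulerA : Fin 3 → Matrix (Fin 4) (Fin 8) ℝ := ![eulerA1, eulerA2, eulerA3]

/-- For a state `z = (ρ, m₁, m₂, U₁₁, U₁₂, E, r₁, r₂) ∈ ℝ⁸`, the 4×3 matrix `Z_𝒜(z)`
with rows `(ρ, m₁, m₂)`, `(m₁, U₁₁+E, U₁₂)`, `(m₂, U₁₂, −U₁₁+E)`, `(E, r₁, r₂)`;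
its `i`-th column equals `A⁽ⁱ⁾ z`. -/
def eulerZ (z : Fin 8 → ℝ) : Matrix (Fin 4) (Fin 3) ℝ :=
  !![z 0, z 1, z 2;
     z 1, z 3 + z 5, z 4;
     z 2, z 4, -z 3 + z 5;
     z 5, z 6, z 7]

/-- The wave cone of the linearized full Euler system:
`Λ = {z̄ ∈ ℝ⁸ : ∃ ξ ∈ ℝ³∖{0}, (Σᵢ ξᵢ A⁽ⁱ⁾) z̄ = 0}`. -/
def eulerWaveCone : Set (Fin 8 → ℝ) :=
  {z | ∃ ξ : Fin 3 → ℝ, ξ ≠ 0 ∧ (∑ i : Fin 3, ξ i • eulerA i) *ᵥ z = 0}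

end

theorem Matrix.rank_eq_card_width_iff {K m n : Type*} [Field K] [Fintype n] (A : Matrix m n K) :
    A.rank = Fintype.card n ↔ ∀ v, A *ᵥ v = 0 → v = 0 := by
  rw [← Matrix.ker_mulVecLin_eq_bot_iff, ← Submodule.finrank_eq_zero, Matrix.rank,
    ← Module.finrank_fintype_fun_eq_card K, ← LinearMap.finrank_range_add_finrank_ker A.mulVecLin]
  omega

theorem Matrix.rank_eq_card_width_of_det_submatrix_ne_zero {K m n : Type*} [Field K] [Fintype n]
    [DecidableEq n] (A : Matrix m n K) (f : n → m) (h : (A.submatrix f id).det ≠ 0) :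
    A.rank = Fintype.card n :=
  le_antisymm A.rank_le_card_width <|
    (rank_of_isUnit _ ((isUnit_iff_isUnit_det _).2 h.isUnit)).symm.le.trans
      (A.rank_submatrix_le f id)

theorem eulerA_sum_mulVec (z : Fin 8 → ℝ) (ξ : Fin 3 → ℝ) :
    (∑ i : Fin 3, ξ i • eulerA i) *ᵥ z = eulerZ z *ᵥ ξ := by
  ext k
  fin_cases k <;>
    simp [eulerA, eulerA1, eulerA2, eulerA3, eulerZ, Matrix.mulVec, dotProduct,
      Fin.sum_univ_succ] <;> ring

theorem mem_eulerWaveCone_iff_rank_lt (z : Fin 8 → ℝ) :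
    z ∈ eulerWaveCone ↔ (eulerZ z).rank < 3 := by
  have hfull : (eulerZ z).rank = 3 ↔ ∀ ξ, eulerZ z *ᵥ ξ = 0 → ξ = 0 := by
    simpa using (eulerZ z).rank_eq_card_width_iff
  simp only [eulerWaveCone, Set.mem_ofPred_eq, eulerA_sum_mulVec]
  rw [← not_iff_not, not_lt, (eulerZ z).rank_le_width.ge_iff_eq, hfull]
  push Not
  exact forall_congr' fun _ ↦ not_imp_not

theorem constant_states_not_in_waveCone_general (γ : ℝ) (hγ1 : γ ≠ 1)
    (z₁ z₂ : Fin 8 → ℝ)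
    (hz₁ : z₁ = ![1, 1, 0, 1 / 2, 0, 3 / 2, 5 / 2, 0])
    (hz₂ : z₂ = ![γ, 1, 0, 1 / (2 * γ), 0, 3 / (2 * γ), 5 / (2 * γ ^ 2), 0]) :
    Matrix.det ((eulerZ (z₁ - z₂)).submatrix (Fin.castSucc : Fin 3 → Fin 4) id)
        = 2 * (1 - γ) * (1 - 1 / γ) ^ 2 ∧
    2 * (1 - γ) * (1 - 1 / γ) ^ 2 ≠ 0 ∧
    (eulerZ (z₁ - z₂)).rank = 3 ∧
    z₁ - z₂ ∉ eulerWaveCone := by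
  have hsub : (eulerZ (z₁ - z₂)).submatrix (Fin.castSucc : Fin 3 → Fin 4) id =
      Matrix.diagonal ![1 - γ, 2 * (1 - 1 / γ), 1 - 1 / γ] := by
    subst hz₁ hz₂
    ext i j
    fin_cases i <;> fin_cases j <;> simp [eulerZ] <;> ring
  have hdet : ((eulerZ (z₁ - z₂)).submatrix (Fin.castSucc : Fin 3 → Fin 4) id).det
      = 2 * (1 - γ) * (1 - 1 / γ) ^ 2 := by
    rw [hsub, Matrix.det_diagonal, Fin.prod_univ_three]
    simp only [Matrix.cons_val]
    ring
  have hne : 2 * (1 - γ) * (1 - 1 / γ) ^ 2 ≠ 0 :=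
    mul_ne_zero (mul_ne_zero two_ne_zero (sub_ne_zero.2 hγ1.symm))
      (pow_ne_zero 2 (sub_ne_zero.2 (by rwa [ne_comm, one_div, inv_ne_one])))
  have hrank : (eulerZ (z₁ - z₂)).rank = 3 :=
    Matrix.rank_eq_card_width_of_det_submatrix_ne_zero _ _ (hdet ▸ hne)
  exact ⟨hdet, hne, hrank, by simp [mem_eulerWaveCone_iff_rank_lt, hrank]⟩

/-- For `γ > 0`, `γ ≠ 1`, and the two constant states
`z₁ = (1, 1, 0, 1/2, 0, 3/2, 5/2, 0)` and
`z₂ = (γ, 1, 0, 1/(2γ), 0, 3/(2γ), 5/(2γ²), 0)`, the determinant of the 3×3 submatrix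
formed by the first three rows of `Z_𝒜(z₁ − z₂)` equals `2(1−γ)(1−1/γ)² ≠ 0`; hence
`Z_𝒜(z₁ − z₂)` has rank 3 and `z₁ − z₂ ∉ Λ`. -/
theorem constant_states_not_in_waveCone (γ : ℝ) (hγ : 0 < γ) (hγ1 : γ ≠ 1)
    (z₁ z₂ : Fin 8 → ℝ)
    (hz₁ : z₁ = ![1, 1, 0, 1 / 2, 0, 3 / 2, 5 / 2, 0])
    (hz₂ : z₂ = ![γ, 1, 0, 1 / (2 * γ), 0, 3 / (2 * γ), 5 / (2 * γ ^ 2), 0]) :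
    Matrix.det ((eulerZ (z₁ - z₂)).submatrix (Fin.castSucc : Fin 3 → Fin 4) id)
        = 2 * (1 - γ) * (1 - 1 / γ) ^ 2 ∧
    2 * (1 - γ) * (1 - 1 / γ) ^ 2 ≠ 0 ∧
    (eulerZ (z₁ - z₂)).rank = 3 ∧
    z₁ - z₂ ∉ eulerWaveCone :=
  constant_states_not_in_waveCone_general γ hγ1 z₁ z₂ hz₁ hz₂
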